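/- A finite simple graph G has exactly one Grundy dominating set if and only if G has no edges. -/

import Mathlib

/-- A closed neighborhood sequence in `G`: a list of distinct vertices such that each
vertex footprints some vertex of its closed neighborhood not contained in the closed
neighborhood of any earlier vertex. -/
def IsClosedNbrSeq {V : Type*} (G : SimpleGraph V) (l : List V) : Prop :=
  l.Nodup ∧ ∀ i : Fin l.length, ∃ w : V, (w = l.get i ∨ G.Adj (l.get i) w) ∧
    ∀ j : Fin l.length, (j : ℕ) < (i : ℕ) → w ≠ l.get j ∧ ¬ G.Adj (l.get j) w

/-- A Grundy dominating sequence: a closed neighborhood sequence of maximum length. -/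
def IsGrundyDomSeq {V : Type*} (G : SimpleGraph V) (l : List V) : Prop :=
  IsClosedNbrSeq G l ∧ ∀ l' : List V, IsClosedNbrSeq G l' → l'.length ≤ l.length

/-- A Grundy dominating set of `G`: the set of vertices of some Grundy dominating
sequence of `G`. -/
def IsGrundyDomSet {V : Type*} (G : SimpleGraph V) (A : Set V) : Prop :=
  ∃ l : List V, IsGrundyDomSeq G l ∧ {v : V | v ∈ l} = A

/-!
Let `(v₁, …, vₖ)` be a Grundy dominating sequence and let `vₖ` footprint `w`. Replacing `vₖ` by any
vertex of `N[w]` gives another Grundy dominating sequence, so if the Grundy dominating set is unique,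
`N[w] = {vₖ}`: hence `w = vₖ` and `vₖ` is isolated. An isolated vertex can be moved to the front of a
closed neighborhood sequence, so repeating the argument shows that all of `v₁, …, vₖ` are isolated;
then any further vertex could be appended to the sequence, so `G` has no vertices outside it and no
edges. Conversely, without edges the closed neighborhood sequences are exactly the lists without
repetition, and the only Grundy dominating set is the whole vertex set.
-/

open SimpleGraph

section

variable {V : Type*} {G : SimpleGraph V}

def SimpleGraph.IsUndominated (G : SimpleGraph V) (l : List V) (w : V) : Prop :=
  ∀ u ∈ l, w ≠ u ∧ ¬ G.Adj u w

theorem SimpleGraph.IsUndominated.notMem {l : List V} {v w : V} (hw : G.IsUndominated l w)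
    (hvw : w = v ∨ G.Adj v w) : v ∉ l := fun hv => by
  rcases hvw with rfl | hvw
  exacts [(hw _ hv).1 rfl, (hw _ hv).2 hvw]

theorem isClosedNbrSeq_iff_take {l : List V} :
    IsClosedNbrSeq G l ↔ l.Nodup ∧ ∀ i (hi : i < l.length),
      ∃ w, (w = l[i] ∨ G.Adj l[i] w) ∧ G.IsUndominated (l.take i) w := by
  simp only [IsClosedNbrSeq, IsUndominated, List.mem_take_iff_getElem, Fin.forall_iff]
  grind

theorem isClosedNbrSeq_nil : IsClosedNbrSeq G [] :=
  ⟨List.nodup_nil, fun i => i.elim0⟩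

theorem isClosedNbrSeq_append_singleton {l : List V} {v : V} :
    IsClosedNbrSeq G (l ++ [v]) ↔
      IsClosedNbrSeq G l ∧ ∃ w, (w = v ∨ G.Adj v w) ∧ G.IsUndominated l w := by
  simp only [isClosedNbrSeq_iff_take]
  constructor
  · rintro ⟨hnd, h⟩
    refine ⟨⟨hnd.of_append_left, fun i hi => ?_⟩, by simpa using h l.length (by simp)⟩
    obtain ⟨w, hw⟩ := h i (by simp; omega)
    rw [List.getElem_append_left hi, List.take_append_of_le_length hi.le] at hw
    exact ⟨w, hw⟩
  · rintro ⟨⟨hnd, h⟩, w, hwv, hw⟩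
    refine ⟨by simpa using hnd.concat (hw.notMem hwv), fun i hi => ?_⟩
    rcases (by simp at hi; omega : i < l.length ∨ i = l.length) with hi | rfl
    · rw [List.getElem_append_left hi, List.take_append_of_le_length hi.le]
      exact h i hi
    · exact ⟨w, by simpa using hwv, by simpa using hw⟩

theorem isClosedNbrSeq_bot_iff {l : List V} :
    IsClosedNbrSeq (⊥ : SimpleGraph V) l ↔ l.Nodup := by
  induction l using List.reverseRecOn with
  | nil => simp [isClosedNbrSeq_nil]
  | append_singleton l v ih =>
    simp [isClosedNbrSeq_append_singleton, ih, IsUndominated, List.nodup_append, eq_comm]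

theorem IsClosedNbrSeq.cons_of_isIsolated {l : List V} {v : V} (h : IsClosedNbrSeq G l)
    (hv : G.IsIsolated v) (hvl : v ∉ l) : IsClosedNbrSeq G (v :: l) := by
  induction l using List.reverseRecOn with
  | nil =>
    exact isClosedNbrSeq_append_singleton (l := []).2
      ⟨isClosedNbrSeq_nil, v, Or.inl rfl, by simp [IsUndominated]⟩
  | append_singleton l x ih =>
    obtain ⟨hl, w, hxw, hw⟩ := isClosedNbrSeq_append_singleton.1 h
    have hwv : w ≠ v := by
      rintro rfl
      rcases hxw with rfl | hxw
      exacts [hvl (by simp), hv _ hxw.symm]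
    refine isClosedNbrSeq_append_singleton (l := v :: l).2
      ⟨ih hl fun h' => hvl (List.mem_append_left _ h'), w, hxw, ?_⟩
    simpa [IsUndominated, hwv] using ⟨hv w, hw⟩

theorem IsGrundyDomSeq.of_length_eq {l l' : List V} (hl : IsGrundyDomSeq G l)
    (hl' : IsClosedNbrSeq G l') (hlen : l'.length = l.length) : IsGrundyDomSeq G l' :=
  ⟨hl', fun l'' h'' => hlen ▸ hl.2 l'' h''⟩

theorem IsGrundyDomSeq.mem_of_existsUnique (hu : ∃! A, IsGrundyDomSet G A) {l l' : List V}
    (hl : IsGrundyDomSeq G l) (hl' : IsGrundyDomSeq G l') {v : V} (hv : v ∈ l) : v ∈ l' := by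
  obtain ⟨A, -, hA⟩ := hu
  have hset : {v | v ∈ l} = {v | v ∈ l'} :=
    (hA _ ⟨l, hl, rfl⟩).trans (hA _ ⟨l', hl', rfl⟩).symm
  exact (Set.ext_iff.1 hset v).1 hv

theorem isIsolated_of_isGrundyDomSeq_append_singleton (hu : ∃! A, IsGrundyDomSet G A)
    {l : List V} {v : V} (hl : IsGrundyDomSeq G (l ++ [v])) : G.IsIsolated v := by
  obtain ⟨hl₀, w, hvw, hw⟩ := isClosedNbrSeq_append_singleton.1 hl.1
  have hvl : v ∉ l := hw.notMem hvw
  -- any vertex of `N[w]` may replace `v`, so by uniqueness it is `v` itself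
  have hreplace : ∀ x, (w = x ∨ G.Adj x w) → v = x := fun x hx => by
    have hx : IsGrundyDomSeq G (l ++ [x]) :=
      hl.of_length_eq (isClosedNbrSeq_append_singleton.2 ⟨hl₀, w, hx, hw⟩) (by simp)
    simpa [hvl] using hl.mem_of_existsUnique hu hx (List.mem_concat_self ..)
  obtain rfl : v = w := hreplace w (Or.inl rfl)
  exact fun z hvz => hvz.ne (hreplace z (Or.inr hvz.symm))

theorem isIsolated_of_isGrundyDomSeq_append (hu : ∃! A, IsGrundyDomSet G A)
    {l₁ l₂ : List V} (hl : IsGrundyDomSeq G (l₁ ++ l₂)) :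
    ∀ v ∈ l₂, G.IsIsolated v := by
  induction l₂ using List.reverseRecOn generalizing l₁ with
  | nil => simp
  | append_singleton l₂ x ih =>
    rw [← List.append_assoc] at hl
    have hx := isIsolated_of_isGrundyDomSeq_append_singleton hu hl
    obtain ⟨hl₀, w, hxw, hw⟩ := isClosedNbrSeq_append_singleton.1 hl.1
    have hrot : IsGrundyDomSeq G (x :: l₁ ++ l₂) :=
      hl.of_length_eq (hl₀.cons_of_isIsolated hx (hw.notMem hxw)) (by simp; omega)
    simpa [or_imp, forall_and, hx] using ih hrot

theorem SimpleGraph.eq_bot_of_existsUnique_isGrundyDomSet (hu : ∃! A, IsGrundyDomSet G A) :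
    G = ⊥ := by
  obtain ⟨A, ⟨l, hl, -⟩, -⟩ := id hu
  have hiso : ∀ v ∈ l, G.IsIsolated v := isIsolated_of_isGrundyDomSeq_append hu (l₁ := []) hl
  refine G.eq_bot_iff_isIsolated.2 fun v => ?_
  by_contra hv
  have hvl : v ∉ l := fun h => hv (hiso v h)
  have hlonger : IsClosedNbrSeq G (l ++ [v]) := isClosedNbrSeq_append_singleton.2
    ⟨hl.1, v, Or.inl rfl, fun u hu => ⟨(ne_of_mem_of_not_mem hu hvl).symm, hiso u hu v⟩⟩
  simpa using hl.2 _ hlonger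

theorem isGrundyDomSeq_bot_iff {l : List V} :
    IsGrundyDomSeq (⊥ : SimpleGraph V) l ↔ l.Nodup ∧ ∀ v, v ∈ l := by
  simp only [IsGrundyDomSeq, isClosedNbrSeq_bot_iff]
  refine ⟨fun ⟨hl, hmax⟩ => ⟨hl, fun v => ?_⟩, fun ⟨hl, hall⟩ => ⟨hl, fun l' hl' => ?_⟩⟩
  · by_contra hv
    simpa using hmax (l ++ [v]) (by simpa using hl.concat hv)
  · exact (List.subperm_of_subset hl' fun v _ => hall v).length_le

theorem isGrundyDomSet_bot_iff [Fintype V] {A : Set V} :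
    IsGrundyDomSet (⊥ : SimpleGraph V) A ↔ A = Set.univ := by
  constructor
  · rintro ⟨l, hl, rfl⟩
    simpa [Set.eq_univ_iff_forall] using (isGrundyDomSeq_bot_iff.1 hl).2
  · rintro rfl
    exact ⟨Finset.univ.toList,
      isGrundyDomSeq_bot_iff.2 ⟨Finset.nodup_toList _, by simp⟩, by simp⟩

end

/-- A finite graph has exactly one Grundy dominating set iff it has no edges. -/
theorem unique_grundyDomSet_iff_no_edges {V : Type*} [Fintype V] (G : SimpleGraph V) :
    (∃! A : Set V, IsGrundyDomSet G A) ↔ G.edgeSet = ∅ := by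
  rw [edgeSet_eq_empty]
  refine ⟨eq_bot_of_existsUnique_isGrundyDomSet, ?_⟩
  rintro rfl
  simp only [isGrundyDomSet_bot_iff, existsUnique_eq]
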